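/- Let $A_1,\ldots,A_r$ be positive semidefinite operators and $A_0 := \sum_i A_i$. With $P_e^*$ the optimal multi-hypothesis error and POVM measurement operators $\{X_k\}$ satisfying $\sum_k X_k^* X_k = I$, define $\Gamma(\{X_k\}) := \operatorname{Tr} A_0 - \sum_k \|X_k A_k\|_1$ and $\Gamma^* := \inf \Gamma(\{X_k\})$ over all such families. Then $\Gamma^* = \operatorname{Tr} A_0 - \operatorname{Tr}\big(\sum_{i=1}^r A_i^2\big)^{1/2}$, and the infimum is attained by the square measurement $X_k = A_k (\sum_i A_i^2)^{-1/2}$. -/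

import Mathlib

open Matrix
open scoped ComplexOrder

/-- The square root `Matrix.PosSemidef.sqrt` of the older Mathlib (removed since), spelled out. -/
noncomputable def psdMatSqrtOld {m : ℕ} {A : Matrix (Fin m) (Fin m) ℂ} (hA : A.PosSemidef) :
    Matrix (Fin m) (Fin m) ℂ :=
  (hA.1.eigenvectorUnitary : Matrix (Fin m) (Fin m) ℂ) *
    diagonal ((↑) ∘ Real.sqrt ∘ hA.1.eigenvalues) *
    (star (hA.1.eigenvectorUnitary : Matrix (Fin m) (Fin m) ℂ))

theorem psdMatSqrtOld_isHermitian {m : ℕ} {A : Matrix (Fin m) (Fin m) ℂ} (hA : A.PosSemidef) :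
    (psdMatSqrtOld hA).IsHermitian :=
  isHermitian_mul_mul_conjTranspose _
    (isHermitian_diagonal_of_self_adjoint _ (funext fun _ => Complex.conj_ofReal _))

noncomputable def matAbs {m : ℕ} (A : Matrix (Fin m) (Fin m) ℂ) : Matrix (Fin m) (Fin m) ℂ :=
  psdMatSqrtOld (Matrix.posSemidef_conjTranspose_mul_self A)

noncomputable def traceNorm {m : ℕ} (A : Matrix (Fin m) (Fin m) ℂ) : ℝ :=
  ((matAbs A).trace).re

open Classical in
noncomputable def psdSqrt {m : ℕ} (A : Matrix (Fin m) (Fin m) ℂ) : Matrix (Fin m) (Fin m) ℂ :=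
  if h : A.PosSemidef then psdMatSqrtOld h else 0

noncomputable def fid {m : ℕ} (A B : Matrix (Fin m) (Fin m) ℂ) : ℝ :=
  traceNorm (psdSqrt A * psdSqrt B)

noncomputable def matPosPart {m : ℕ} (A : Matrix (Fin m) (Fin m) ℂ) : Matrix (Fin m) (Fin m) ℂ :=
  (2⁻¹ : ℂ) • (matAbs A + A)

noncomputable def matNegPart {m : ℕ} (A : Matrix (Fin m) (Fin m) ℂ) : Matrix (Fin m) (Fin m) ℂ :=
  (2⁻¹ : ℂ) • (matAbs A - A)

/-- Pseudo-inverse of a Hermitian matrix via its spectral decomposition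
(inverting only the nonzero eigenvalues, using `(0:ℝ)⁻¹ = 0`). -/
noncomputable def herPinv {m : ℕ} {A : Matrix (Fin m) (Fin m) ℂ} (hA : A.IsHermitian) :
    Matrix (Fin m) (Fin m) ℂ :=
  (hA.eigenvectorUnitary : Matrix (Fin m) (Fin m) ℂ) *
    Matrix.diagonal (fun i => (((hA.eigenvalues i)⁻¹ : ℝ) : ℂ)) *
    (star (hA.eigenvectorUnitary : Matrix (Fin m) (Fin m) ℂ))

open Classical in
/-- `S^{-1/2}` taken on the support of the positive semidefinite matrix `S`. -/
noncomputable def invSqrt {m : ℕ} (A : Matrix (Fin m) (Fin m) ℂ) : Matrix (Fin m) (Fin m) ℂ :=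
  if h : A.PosSemidef then herPinv (psdMatSqrtOld_isHermitian h) else 0

/-!
Put `S = ∑ Aᵢ Aᵢᴴ` and `T = S^{1/2}`. For a measurement `X`, factor
`X_k A_k = (X_k S^{1/4}) (S^{-1/4} A_k)` with `S^{-1/4}` taken on the support of `S`; this is
legitimate because `S` dominates `A_k A_kᴴ`, so the range of `A_k` lies in that support.
For any product, the polar decomposition `Wᴴ B C = |B C|` (with `W Wᴴ` a projection) and
`2 Re tr(Mᴴ N) ≤ tr(Mᴴ M) + tr(Nᴴ N)` give `2 ‖B C‖₁ ≤ tr(B Bᴴ) + tr(Cᴴ C)`. Summed over `k`,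
both terms equal `tr T`: the first because `∑ X_kᴴ X_k = 1`, the second because it is
`tr(S^{-1/2} S)`. For the square measurement the matrices `A_k T⁻¹ A_k` are positive, so their
trace norms are traces, adding up to `tr(T⁻¹ S) = tr T`.
-/

open scoped MatrixOrder

namespace Matrix

variable {ι m n 𝕜 : Type*} [Fintype m] [Fintype n] [RCLike 𝕜]

theorem two_mul_re_trace_conjTranspose_mul_le (M N : Matrix m n 𝕜) :
    2 * RCLike.re (Mᴴ * N).trace ≤ RCLike.re (Mᴴ * M).trace + RCLike.re (Nᴴ * N).trace := by
  have hsq := RCLike.nonneg_iff.mp (posSemidef_conjTranspose_mul_self (M - N)).trace_nonneg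
  have hswap : RCLike.re (Nᴴ * M).trace = RCLike.re (Mᴴ * N).trace := by
    rw [← RCLike.conj_re, ← RCLike.star_def, ← trace_conjTranspose, conjTranspose_mul,
      conjTranspose_conjTranspose]
  simp only [conjTranspose_sub, Matrix.sub_mul, Matrix.mul_sub, trace_sub, map_sub] at hsq
  linarith [hsq.1]

theorem trace_sum_mul_mul_conjTranspose {α : Type*} [CommSemiring α] [StarRing α] (s : Finset ι)
    (Y : ι → Matrix m n α) (P : Matrix n n α) :
    ∑ i ∈ s, (Y i * P * (Y i)ᴴ).trace = (P * ∑ i ∈ s, (Y i)ᴴ * Y i).trace := by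
  rw [Finset.mul_sum, trace_sum]
  refine Finset.sum_congr rfl fun i _ => ?_
  rw [trace_mul_cycle, trace_mul_comm]

theorem mul_eq_zero_of_mul_sum_mul_conjTranspose_eq_zero {s : Finset ι} {B : ι → Matrix n m 𝕜}
    {E : Matrix n n 𝕜} (h : E * ∑ j ∈ s, B j * (B j)ᴴ = 0) {i : ι} (hi : i ∈ s) :
    E * B i = 0 := by
  have hsum : ∑ j ∈ s, (E * B j * (E * B j)ᴴ).trace = 0 := by
    rw [← trace_sum, ← trace_zero n 𝕜, ← zero_mul Eᴴ, ← h, Finset.mul_sum, Finset.sum_mul]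
    simp only [conjTranspose_mul, Matrix.mul_assoc]
  rw [Finset.sum_eq_zero_iff_of_nonneg fun j _ =>
    (posSemidef_self_mul_conjTranspose _).trace_nonneg] at hsum
  exact trace_mul_conjTranspose_self_eq_zero_iff.mp (hsum i hi)

variable [DecidableEq n]

theorem re_trace_mul_le_of_isStarProjection {C Q : Matrix n n 𝕜} (hC : C.PosSemidef)
    (hQ : IsStarProjection Q) : RCLike.re (C * Q).trace ≤ RCLike.re C.trace := by
  obtain ⟨hidem, hself⟩ := hQ.one_sub
  have hpsd : ((1 - Q)ᴴ * C * (1 - Q)).PosSemidef := hC.conjTranspose_mul_mul_same _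
  have htr : ((1 - Q)ᴴ * C * (1 - Q)).trace = C.trace - (C * Q).trace := by
    rw [← star_eq_conjTranspose, hself, trace_mul_cycle, hidem.eq, trace_mul_comm, mul_sub, mul_one,
      trace_sub]
  have := RCLike.nonneg_iff.mp hpsd.trace_nonneg
  rw [htr, map_sub] at this
  linarith [this.1]

theorem cfc_mul_cfc (A : Matrix n n 𝕜) (f g : ℝ → ℝ) :
    cfc f A * cfc g A = cfc (fun x => f x * g x) A :=
  (cfc_mul f g A (A.finite_real_spectrum.continuousOn f)
    (A.finite_real_spectrum.continuousOn g)).symm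

theorem cfc_mul_self {A : Matrix n n 𝕜} (hA : A.IsHermitian) (f : ℝ → ℝ) :
    cfc f A * A = cfc (fun x => f x * x) A := by
  have := cfc_mul_cfc A f fun x => x
  rwa [cfc_id' ℝ A] at this

theorem cfc_cfc (A : Matrix n n 𝕜) (f g : ℝ → ℝ) (hA : A.IsHermitian) :
    cfc g (cfc f A) = cfc (g ∘ f) A :=
  (cfc_comp g f A hA ((A.finite_real_spectrum.image f).continuousOn g)
    (A.finite_real_spectrum.continuousOn f)).symm

theorem cfc_mul_eq_self_of_sum {s : Finset ι} (B : ι → Matrix n m 𝕜) {f : ℝ → ℝ}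
    (hf : ∀ x, 0 < x → f x = 1) {i : ι} (hi : i ∈ s) :
    cfc f (∑ j ∈ s, B j * (B j)ᴴ) * B i = B i := by
  set S := ∑ j ∈ s, B j * (B j)ᴴ
  have hS : S.PosSemidef := posSemidef_sum s fun j _ => posSemidef_self_mul_conjTranspose (B j)
  have hfS : cfc f S * S = S := calc
    cfc f S * S = cfc (fun x => f x * x) S := cfc_mul_self hS.isHermitian f
    _ = cfc (fun x => x) S := cfc_congr fun x hx => by
      rcases (spectrum_nonneg_of_nonneg hS.nonneg hx).eq_or_lt with rfl | hx0
      · simp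
      · simp [hf x hx0]
    _ = S := cfc_id' ℝ S hS.isHermitian
  have hker : (1 - cfc f S) * S = 0 := by rw [Matrix.sub_mul, Matrix.one_mul, hfS, sub_self]
  have := mul_eq_zero_of_mul_sum_mul_conjTranspose_eq_zero hker hi
  rwa [Matrix.sub_mul, Matrix.one_mul, sub_eq_zero, eq_comm] at this

theorem exists_conjTranspose_mul_eq_cfc_sqrt (B : Matrix m n 𝕜) :
    ∃ W : Matrix m n 𝕜, Wᴴ * B = cfc Real.sqrt (Bᴴ * B) ∧ IsStarProjection (W * Wᴴ) := by
  have hBB : (Bᴴ * B).IsHermitian := isHermitian_conjTranspose_mul_self B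
  set P := cfc (fun x => (√x)⁻¹) (Bᴴ * B)
  have hP : Pᴴ = P := (cfc_predicate _ _ : IsSelfAdjoint P)
  have hPBB : P * (Bᴴ * B) = cfc Real.sqrt (Bᴴ * B) := by
    rw [cfc_mul_self hBB]
    congr with x
    rw [inv_mul_eq_div, Real.div_sqrt]
  have hPaP : P * cfc Real.sqrt (Bᴴ * B) * P = P := by
    rw [cfc_mul_cfc, cfc_mul_cfc]
    congr with x
    simpa using mul_inv_mul_cancel (√x)⁻¹
  refine ⟨B * P, ?_, ?_, ?_⟩
  · rw [conjTranspose_mul, hP, Matrix.mul_assoc, hPBB]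
  · change B * P * (B * P)ᴴ * (B * P * (B * P)ᴴ) = B * P * (B * P)ᴴ
    rw [conjTranspose_mul, hP]
    calc B * P * (P * Bᴴ) * (B * P * (P * Bᴴ))
        = B * (P * (P * (Bᴴ * B)) * P) * (P * Bᴴ) := by simp only [Matrix.mul_assoc]
      _ = B * P * (P * Bᴴ) := by rw [hPBB, hPaP, Matrix.mul_assoc]
  · exact isHermitian_mul_conjTranspose_self (B * P)

end Matrix

section

variable {ι : Type*} [Fintype ι] {m : ℕ}

theorem psdMatSqrtOld_eq_cfc {A : Matrix (Fin m) (Fin m) ℂ} (hA : A.PosSemidef) :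
    psdMatSqrtOld hA = cfc Real.sqrt A := by
  rw [hA.1.cfc_eq]; rfl

theorem psdSqrt_eq_cfc {A : Matrix (Fin m) (Fin m) ℂ} (hA : A.PosSemidef) :
    psdSqrt A = cfc Real.sqrt A := by
  rw [psdSqrt, dif_pos hA, psdMatSqrtOld_eq_cfc]

theorem invSqrt_eq_cfc {A : Matrix (Fin m) (Fin m) ℂ} (hA : A.PosSemidef) :
    invSqrt A = cfc (fun x => (√x)⁻¹) A := by
  have hinv : herPinv (psdMatSqrtOld_isHermitian hA) = cfc (·⁻¹ : ℝ → ℝ) (psdMatSqrtOld hA) := by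
    rw [(psdMatSqrtOld_isHermitian hA).cfc_eq]; rfl
  rw [invSqrt, dif_pos hA, hinv, psdMatSqrtOld_eq_cfc, cfc_cfc A _ _ hA.1]
  rfl

theorem matAbs_eq_cfc (B : Matrix (Fin m) (Fin m) ℂ) : matAbs B = cfc Real.sqrt (Bᴴ * B) :=
  psdMatSqrtOld_eq_cfc _

theorem traceNorm_of_posSemidef {B : Matrix (Fin m) (Fin m) ℂ} (hB : B.PosSemidef) :
    traceNorm B = B.trace.re := by
  have hBB : B * B = cfc (fun x : ℝ => x * x) B := by
    rw [← cfc_mul_self hB.1 fun x => x, cfc_id' ℝ B hB.1.isSelfAdjoint]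
  have habs : matAbs B = B := calc
    matAbs B = cfc (Real.sqrt ∘ fun x => x * x) B := by
      rw [matAbs_eq_cfc, hB.1.eq, hBB, cfc_cfc B _ _ hB.1]
    _ = cfc (fun x => x) B := cfc_congr fun x hx =>
      Real.sqrt_mul_self (spectrum_nonneg_of_nonneg hB.nonneg hx)
    _ = B := cfc_id' ℝ B hB.1.isSelfAdjoint
  rw [traceNorm, habs]

theorem two_mul_traceNorm_mul_le (B C : Matrix (Fin m) (Fin m) ℂ) :
    2 * traceNorm (B * C) ≤ (B * Bᴴ).trace.re + (Cᴴ * C).trace.re := by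
  obtain ⟨W, hW, hWW⟩ := exists_conjTranspose_mul_eq_cfc_sqrt (B * C)
  have hnorm : traceNorm (B * C) = ((Bᴴ * W)ᴴ * C).trace.re := by
    rw [traceNorm, matAbs_eq_cfc, ← hW, conjTranspose_mul, conjTranspose_conjTranspose,
      Matrix.mul_assoc]
  have hcontr : ((Bᴴ * W)ᴴ * (Bᴴ * W)).trace.re ≤ (B * Bᴴ).trace.re := calc
    ((Bᴴ * W)ᴴ * (Bᴴ * W)).trace.re = (B * Bᴴ * (W * Wᴴ)).trace.re := by
      rw [conjTranspose_mul, conjTranspose_conjTranspose, Matrix.mul_assoc, trace_mul_comm]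
      simp only [Matrix.mul_assoc]
    _ ≤ (B * Bᴴ).trace.re :=
      re_trace_mul_le_of_isStarProjection (posSemidef_self_mul_conjTranspose B) hWW
  have := two_mul_re_trace_conjTranspose_mul_le (Bᴴ * W) C
  simp only [RCLike.re_to_complex] at this
  linarith

theorem sum_traceNorm_mul_le_trace_sqrt (A X : ι → Matrix (Fin m) (Fin m) ℂ)
    (hX : ∑ k, (X k)ᴴ * X k = 1) :
    ∑ k, traceNorm (X k * A k) ≤ (cfc Real.sqrt (∑ i, A i * (A i)ᴴ)).trace.re := by
  set S := ∑ i, A i * (A i)ᴴ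
  have hS : S.PosSemidef := posSemidef_sum _ fun i _ => posSemidef_self_mul_conjTranspose (A i)
  set T := cfc Real.sqrt S
  set R := cfc (fun x => √(√x)) S
  set R' := cfc (fun x => (√(√x))⁻¹) S
  have hR : Rᴴ = R := (cfc_predicate _ _ : IsSelfAdjoint R)
  have hR' : R'ᴴ = R' := (cfc_predicate _ _ : IsSelfAdjoint R')
  have hRR : R * R = T := by
    rw [cfc_mul_cfc]
    congr with x
    exact Real.mul_self_sqrt (Real.sqrt_nonneg x)
  have hR'S : R' * R' * S = T := by
    rw [cfc_mul_cfc, cfc_mul_self hS.1]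
    congr with x
    rw [← mul_inv, Real.mul_self_sqrt (Real.sqrt_nonneg x), inv_mul_eq_div, Real.div_sqrt]
  have hsupp : ∀ k, R * (R' * A k) = A k := fun k => by
    rw [← Matrix.mul_assoc, cfc_mul_cfc]
    exact cfc_mul_eq_self_of_sum A
      (fun x hx => mul_inv_cancel₀ (by positivity)) (Finset.mem_univ k)
  have hterm : ∀ k, 2 * traceNorm (X k * A k) ≤
      (X k * T * (X k)ᴴ).trace.re + ((A k)ᴴ * (R' * R') * (A k)ᴴᴴ).trace.re := fun k => by
    calc 2 * traceNorm (X k * A k) = 2 * traceNorm (X k * R * (R' * A k)) := by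
          rw [Matrix.mul_assoc, hsupp]
      _ ≤ (X k * R * (X k * R)ᴴ).trace.re + ((R' * A k)ᴴ * (R' * A k)).trace.re :=
          two_mul_traceNorm_mul_le _ _
      _ = _ := by
          rw [conjTranspose_mul, conjTranspose_mul, hR, hR', conjTranspose_conjTranspose, ← hRR]
          simp only [Matrix.mul_assoc]
  have hsumX : ∑ k, (X k * T * (X k)ᴴ).trace.re = T.trace.re := by
    rw [← Complex.re_sum, trace_sum_mul_mul_conjTranspose, hX, Matrix.mul_one]
  have hsumA : ∑ k, ((A k)ᴴ * (R' * R') * (A k)ᴴᴴ).trace.re = T.trace.re := by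
    rw [← Complex.re_sum, trace_sum_mul_mul_conjTranspose]
    simp only [conjTranspose_conjTranspose]
    rw [← hR'S]
  have := Finset.sum_le_sum fun k (_ : k ∈ Finset.univ) => hterm k
  rw [← Finset.mul_sum, Finset.sum_add_distrib, hsumX, hsumA] at this
  linarith

theorem sum_traceNorm_mul_invSqrt_mul {A : ι → Matrix (Fin m) (Fin m) ℂ}
    (hA : ∀ i, (A i).IsHermitian) :
    ∑ k, traceNorm (A k * invSqrt (∑ i, A i * A i) * A k) =
      (cfc Real.sqrt (∑ i, A i * A i)).trace.re := by
  set S := ∑ i, A i * A i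
  have hSeq : S = ∑ i, (A i)ᴴ * A i := by simp only [S, (hA _).eq]
  have hS : S.PosSemidef :=
    hSeq ▸ posSemidef_sum _ fun i _ => posSemidef_conjTranspose_mul_self (A i)
  set P := cfc (fun x => (√x)⁻¹) S
  have hP : P.PosSemidef := (cfc_nonneg fun x _ => inv_nonneg.2 (Real.sqrt_nonneg x)).posSemidef
  have hterm : ∀ k, traceNorm (A k * P * A k) = (A k * P * (A k)ᴴ).trace.re := fun k => by
    rw [traceNorm_of_posSemidef, (hA k).eq]
    simpa only [(hA k).eq] using hP.mul_mul_conjTranspose_same (A k)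
  rw [invSqrt_eq_cfc hS, Finset.sum_congr rfl fun k _ => hterm k, ← Complex.re_sum,
    trace_sum_mul_mul_conjTranspose, ← hSeq, cfc_mul_self hS.1]
  congr with x
  rw [inv_mul_eq_div, Real.div_sqrt]

end

theorem tyson_gamma_formula {d r : ℕ}
    (A : Fin r → Matrix (Fin d) (Fin d) ℂ) (hA : ∀ i, (A i).PosSemidef) :
    (∀ X : Fin r → Matrix (Fin d) (Fin d) ℂ, (∑ k, (X k)ᴴ * X k) = 1 →
      ((∑ i, A i).trace).re - ((psdSqrt (∑ i, A i * A i)).trace).re ≤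
        ((∑ i, A i).trace).re - ∑ k, traceNorm (X k * A k)) ∧
    ((∑ i, A i).trace).re - ∑ k, traceNorm ((A k * invSqrt (∑ i, A i * A i)) * A k) =
      ((∑ i, A i).trace).re - ((psdSqrt (∑ i, A i * A i)).trace).re := by
  have hS : ∑ i, A i * A i = ∑ i, A i * (A i)ᴴ := by simp only [(hA _).isHermitian.eq]
  have hSpsd : (∑ i, A i * A i).PosSemidef :=
    hS ▸ posSemidef_sum _ fun i _ => posSemidef_self_mul_conjTranspose (A i)
  rw [psdSqrt_eq_cfc hSpsd]
  refine ⟨fun X hX => sub_le_sub_left ?_ _, ?_⟩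
  · rw [hS]
    exact sum_traceNorm_mul_le_trace_sqrt A X hX
  · rw [sum_traceNorm_mul_invSqrt_mul fun i => (hA i).isHermitian]
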